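/- arXiv:1608.08733 — 2 statements merged into one kernel-verified Lean document; each statement's English description precedes it below -/
import Mathlib

section
/- If P and Q are smooth complex-valued functions on an open subset of a Riemannian manifold with Q nonvanishing, and both are eigenfunctions of the Laplace–Beltrami operator τ with the same eigenvalue λ (i.e. τ(P) = λP and τ(Q) = λQ), then the quotient f = P/Q satisfies Q³τ(f) = −2Q·κ(P,Q) + 2P·κ(Q,Q). -/
open scoped BigOperators

/-- Partial derivative in the `i`-th coordinate direction of a complex-valued
function on Euclidean space. -/
noncomputable def pd {n : ℕ} (i : Fin n) (f : EuclideanSpace ℝ (Fin n) → ℂ)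
    (x : EuclideanSpace ℝ (Fin n)) : ℂ :=
  deriv (fun t : ℝ => f (x + t • EuclideanSpace.single i (1 : ℝ))) 0

/-- The Laplace–Beltrami operator `τ` of the Riemannian manifold `ℝⁿ`. -/
noncomputable def lap {n : ℕ} (f : EuclideanSpace ℝ (Fin n) → ℂ)
    (x : EuclideanSpace ℝ (Fin n)) : ℂ :=
  ∑ i, pd i (pd i f) x

/-- The conformality operator `κ(f,h) = g(∇f,∇h)`. -/
noncomputable def kappa {n : ℕ} (f h : EuclideanSpace ℝ (Fin n) → ℂ)
    (x : EuclideanSpace ℝ (Fin n)) : ℂ :=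
  ∑ i, pd i f x * pd i h x

/-!
Along each coordinate line `∂ᵢ∂ᵢ(P/Q)` is the second derivative of a quotient of one-variable
functions, `(g/h)'' = g''/h - 2g'h'/h² - gh''/h² + 2g(h')²/h³`. Summing over `i` gives
`τ(P/Q) = τP/Q - 2κ(P,Q)/Q² - P τQ/Q² + 2Pκ(Q,Q)/Q³`, and the eigenvalue terms `λP/Q - PλQ/Q²`
cancel.
-/

theorem deriv_comp_add_smul_eq {𝕜 E F : Type*} [NontriviallyNormedField 𝕜] [AddCommGroup E]
    [Module 𝕜 E] [NormedAddCommGroup F] [NormedSpace 𝕜 F] (f : E → F) (x v : E) (t : 𝕜) :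
    deriv (fun s : 𝕜 => f (x + t • v + s • v)) 0 = deriv (fun s : 𝕜 => f (x + s • v)) t := by
  simpa [add_smul, add_assoc] using deriv_comp_const_add (fun s : 𝕜 => f (x + s • v)) t 0

open Topology in
theorem deriv_deriv_div {𝕜 𝕜' : Type*} [NontriviallyNormedField 𝕜] [NontriviallyNormedField 𝕜']
    [NormedAlgebra 𝕜 𝕜'] {g h : 𝕜 → 𝕜'} {a : 𝕜} (hg : ContDiffAt 𝕜 2 g a)
    (hh : ContDiffAt 𝕜 2 h a) (ha : h a ≠ 0) :
    deriv (deriv fun t => g t / h t) a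
      = deriv (deriv g) a / h a - 2 * deriv g a * deriv h a / h a ^ 2
        - g a * deriv (deriv h) a / h a ^ 2 + 2 * g a * deriv h a ^ 2 / h a ^ 3 := by
  have hg' : ∀ᶠ t in 𝓝 a, DifferentiableAt 𝕜 g t :=
    (hg.eventually (by simp)).mono fun t ht => ht.differentiableAt (by simp)
  have hh' : ∀ᶠ t in 𝓝 a, DifferentiableAt 𝕜 h t :=
    (hh.eventually (by simp)).mono fun t ht => ht.differentiableAt (by simp)
  have hquot : deriv (fun t => g t / h t)
      =ᶠ[𝓝 a] fun t => (deriv g t * h t - g t * deriv h t) / h t ^ 2 := by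
    filter_upwards [hg', hh', hh.continuousAt.eventually_ne ha] with t hgt hht hht0
    exact deriv_div hgt hht hht0
  have hg'' : HasDerivAt (deriv g) (deriv (deriv g) a) a :=
    ((hg.derivWithin (m := 1) (by norm_num)).differentiableAt one_ne_zero).hasDerivAt
  have hh'' : HasDerivAt (deriv h) (deriv (deriv h) a) a :=
    ((hh.derivWithin (m := 1) (by norm_num)).differentiableAt one_ne_zero).hasDerivAt
  have hga := hg'.self_of_nhds.hasDerivAt
  have hha := hh'.self_of_nhds.hasDerivAt
  have hquot' : HasDerivAt (fun t => (deriv g t * h t - g t * deriv h t) / h t ^ 2) _ a :=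
    ((hg''.mul hha).sub (hga.mul hh'')).div (hha.pow 2) (pow_ne_zero 2 ha)
  rw [hquot.deriv_eq, hquot'.deriv]
  simp only [Pi.sub_apply, Pi.mul_apply]
  field_simp
  ring

theorem pd_pd_eq_deriv_deriv {n : ℕ} (i : Fin n) (f : EuclideanSpace ℝ (Fin n) → ℂ)
    (x : EuclideanSpace ℝ (Fin n)) :
    pd i (pd i f) x = deriv (deriv fun t : ℝ => f (x + t • EuclideanSpace.single i 1)) 0 := by
  unfold pd
  congr 1
  funext t
  exact deriv_comp_add_smul_eq f x _ t

theorem lap_div {n : ℕ} {P Q : EuclideanSpace ℝ (Fin n) → ℂ} {x : EuclideanSpace ℝ (Fin n)}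
    (hP : ContDiffAt ℝ 2 P x) (hQ : ContDiffAt ℝ 2 Q x) (hx : Q x ≠ 0) :
    lap (fun y => P y / Q y) x
      = lap P x / Q x - 2 * kappa P Q x / Q x ^ 2 - P x * lap Q x / Q x ^ 2
        + 2 * P x * kappa Q Q x / Q x ^ 3 := by
  have hline : ∀ {f : EuclideanSpace ℝ (Fin n) → ℂ}, ContDiffAt ℝ 2 f x → ∀ i : Fin n,
      ContDiffAt ℝ 2 (fun t : ℝ => f (x + t • EuclideanSpace.single i 1)) 0 := by
    intro f hf i
    refine ContDiffAt.comp (f := fun t : ℝ => x + t • EuclideanSpace.single i 1) 0 ?_ (by fun_prop)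
    simpa using hf
  simp only [lap, kappa, Finset.sum_div, Finset.mul_sum, ← Finset.sum_sub_distrib,
    ← Finset.sum_add_distrib]
  refine Finset.sum_congr rfl fun i _ => ?_
  simp only [pd_pd_eq_deriv_deriv]
  rw [deriv_deriv_div (hline hP i) (hline hQ i) (by simpa using hx)]
  simp only [pd, zero_smul, add_zero]
  ring

/-- if `τ(P) = λP` and `τ(Q) = λQ` on an open set where `Q` does
not vanish, then `f = P/Q` satisfies `Q³ τ(f) = −2Q κ(P,Q) + 2P κ(Q,Q)`. -/
theorem stmt_3 {n : ℕ} (P Q : EuclideanSpace ℝ (Fin n) → ℂ) (lam : ℂ)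
    (s : Set (EuclideanSpace ℝ (Fin n))) (hs : IsOpen s)
    (hP : ContDiffOn ℝ 2 P s) (hQsmooth : ContDiffOn ℝ 2 Q s)
    (hQ : ∀ x ∈ s, Q x ≠ 0)
    (hPeig : ∀ x ∈ s, lap P x = lam * P x)
    (hQeig : ∀ x ∈ s, lap Q x = lam * Q x) :
    ∀ x ∈ s, (Q x) ^ 3 * lap (fun y => P y / Q y) x
      = -2 * Q x * kappa P Q x + 2 * P x * kappa Q Q x := by
  intro x hx
  have hQx := hQ x hx
  rw [lap_div (hP.contDiffAt (hs.mem_nhds hx)) (hQsmooth.contDiffAt (hs.mem_nhds hx)) hQx,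
    hPeig x hx, hQeig x hx]
  field_simp
  ring
end

section
/- Let z_{jα} : U(n) → ℂ denote the matrix coefficient functions z ↦ z_{jα} of the standard representation. With respect to the left-invariant metric on U(n) induced by ⟨Z,W⟩ = Re tr(ZW*), the Laplace–Beltrami operator τ and conformality operator κ satisfy τ(z_{jα}) = −n·z_{jα} and κ(z_{jα}, z_{kβ}) = −z_{kα}·z_{jβ}. -/
open Matrix
open scoped BigOperators

variable {n : ℕ}

/-- The derivative of `f` at `p` along the left-invariant vector field determined by
`Z ∈ 𝔤𝔩(n,ℂ)`:  `Z(f)(p) = d/ds f(p·exp(sZ))|_{s=0}`. -/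
noncomputable def lieD (Z : Matrix (Fin n) (Fin n) ℂ)
    (f : Matrix (Fin n) (Fin n) ℂ → ℂ) (p : Matrix (Fin n) (Fin n) ℂ) : ℂ :=
  deriv (fun s : ℝ => f (p * NormedSpace.exp (s • Z))) 0

/-- The second derivative `Z²(f)(p) = d²/ds² f(p·exp(sZ))|_{s=0}`. -/
noncomputable def lieD2 (Z : Matrix (Fin n) (Fin n) ℂ)
    (f : Matrix (Fin n) (Fin n) ℂ → ℂ) (p : Matrix (Fin n) (Fin n) ℂ) : ℂ :=
  iteratedDeriv 2 (fun s : ℝ => f (p * NormedSpace.exp (s • Z))) 0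

/-- The contribution `Z²(f) − [Z,Zᵗ]_𝔤(f)` of a basis vector `Z` to the tension field.
(For each element of the canonical basis of `𝔲(n)` below, `[Z,Zᵗ] = 0`, so the bracket
term is its own orthogonal projection onto `𝔲(n)`.) -/
noncomputable def tensTerm (Z : Matrix (Fin n) (Fin n) ℂ)
    (f : Matrix (Fin n) (Fin n) ℂ → ℂ) (p : Matrix (Fin n) (Fin n) ℂ) : ℂ :=
  lieD2 Z f p - lieD (Z * Zᵀ - Zᵀ * Z) f p

/-- `Y_{rs} = (E_{rs} − E_{sr})/√2`. -/
noncomputable def Ybas (r s : Fin n) : Matrix (Fin n) (Fin n) ℂ :=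
  ((Real.sqrt 2)⁻¹ : ℝ) • (Matrix.single r s (1 : ℂ) - Matrix.single s r (1 : ℂ))

/-- `iX_{rs} = i(E_{rs} + E_{sr})/√2`. -/
noncomputable def iXbas (r s : Fin n) : Matrix (Fin n) (Fin n) ℂ :=
  ((Real.sqrt 2)⁻¹ : ℝ) •
    (Complex.I • (Matrix.single r s (1 : ℂ) + Matrix.single s r (1 : ℂ)))

/-- `iD_t = iE_{tt}`. -/
noncomputable def iDbas (t : Fin n) : Matrix (Fin n) (Fin n) ℂ :=
  Complex.I • Matrix.single t t (1 : ℂ)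

/-- The Laplace–Beltrami operator `τ(f) = Σ_{Z∈ℬ} (Z²(f) − [Z,Zᵗ]_𝔤(f))` of `U(n)`
with the left-invariant metric induced by `⟨Z,W⟩ = Re tr(ZW*)`, with respect to the
canonical orthonormal basis `ℬ = {Y_{rs}, iX_{rs} : r<s} ∪ {iD_t}` of `𝔲(n)`. -/
noncomputable def tension (f : Matrix (Fin n) (Fin n) ℂ → ℂ)
    (p : Matrix (Fin n) (Fin n) ℂ) : ℂ :=
  (∑ r, ∑ s, if r < s then tensTerm (Ybas r s) f p + tensTerm (iXbas r s) f p else 0)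
    + ∑ t, tensTerm (iDbas t) f p

/-- The conformality operator `κ(f,h) = Σ_{Z∈ℬ} Z(f)Z(h)` on `U(n)`. -/
noncomputable def conf (f h : Matrix (Fin n) (Fin n) ℂ → ℂ)
    (p : Matrix (Fin n) (Fin n) ℂ) : ℂ :=
  (∑ r, ∑ s, if r < s then lieD (Ybas r s) f p * lieD (Ybas r s) h p
      + lieD (iXbas r s) f p * lieD (iXbas r s) h p else 0)
    + ∑ t, lieD (iDbas t) f p * lieD (iDbas t) h p

/-!
Along the curve `s ↦ p·exp(sZ)` the coordinate `z_{jα}` has derivatives `(pZ)_{jα}` and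
`(pZ²)_{jα}` at `s = 0`, and every basis vector satisfies `Z Zᵀ = Zᵀ Z`, so `τ` and `κ` become
matrix algebra. Since `Y_{sr} = -Y_{rs}`, `iX_{sr} = iX_{rs}` and `iX_{tt} = √2·iD_t`, the sum
over `r < s` plus the diagonal terms is half of the sum of the `Y_{rs}`, `iX_{rs}` terms over all
pairs `(r, s)`. For every pair, `Y_{rs}² + (iX_{rs})² = -(E_{rr} + E_{ss})`, which sums to
`-2n·I`, and `Y(f)Y(h) + iX(f)iX(h) = -(E_{rs}(f)E_{sr}(h) + E_{sr}(f)E_{rs}(h))`, which sums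
to `-2 z_{kα} z_{jβ}` for `f = z_{jα}`, `h = z_{kβ}`.
-/

theorem Finset.two_nsmul_sum_sum_ite_lt_add_sum_diag {ι M : Type*} [Fintype ι] [LinearOrder ι]
    [AddCommMonoid M] (g : ι → ι → M) (hg : ∀ r s, g r s = g s r) (d : ι → M)
    (hd : ∀ t, 2 • d t = g t t) :
    2 • ((∑ r, ∑ s, if r < s then g r s else 0) + ∑ t, d t) = ∑ r, ∑ s, g r s := by
  have hsplit : ∀ r s, g r s = ((if r < s then g r s else 0) + if s < r then g s r else 0)
      + if r = s then g r s else 0 := by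
    intro r s
    rcases lt_trichotomy r s with h | rfl | h
    · simp [h, h.not_gt, h.ne]
    · simp
    · simp [h, h.not_gt, h.ne', hg r s]
  have hswap :
      (∑ r, ∑ s, if s < r then g s r else 0) = ∑ r, ∑ s, if r < s then g r s else 0 :=
    Finset.sum_comm
  rw [Finset.sum_congr rfl fun r _ => Finset.sum_congr rfl fun s _ => hsplit r s]
  simp only [Finset.sum_add_distrib, hswap, Finset.sum_ite_eq, Finset.mem_univ, if_true,
    ← hd, ← Finset.smul_sum]
  abel

section SingleMatrices

variable {ι R : Type*} [Fintype ι] [DecidableEq ι]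

theorem Matrix.mul_single_apply [NonUnitalNonAssocSemiring R] (M : Matrix ι ι R) (i j a b : ι)
    (c : R) : (M * single i j c) a b = if j = b then M a i * c else 0 := by
  split_ifs with h
  · subst h
    exact mul_single_apply_same c i j a M
  · exact mul_single_apply_of_ne c i j a b (Ne.symm h) M

theorem Matrix.sum_mul_single_self_apply [NonAssocSemiring R] (M : Matrix ι ι R) (a b : ι) :
    ∑ i : ι, (M * single i i (1 : R)) a b = M a b := by
  rw [← Matrix.sum_apply, ← Matrix.mul_sum, sum_single_one, Matrix.mul_one]

end SingleMatrices

theorem hasDerivAt_mul_exp_smul_mul_apply {ι : Type*} [Fintype ι] [DecidableEq ι]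
    (p Z Q : Matrix ι ι ℂ) (j α : ι) (t : ℝ) :
    HasDerivAt (fun s : ℝ => (p * NormedSpace.exp (s • Z) * Q) j α)
      ((p * NormedSpace.exp (t • Z) * Z * Q) j α) t := by
  let _ := Matrix.linftyOpNormedRing (n := ι) (α := ℂ)
  let _ := Matrix.linftyOpNormedAlgebra (R := ℝ) (n := ι) (α := ℂ)
  have hexp := ((hasDerivAt_exp_smul_const (𝕂 := ℝ) Z t).const_mul p).mul_const Q
  rw [← mul_assoc p] at hexp
  exact (entryLinearMap ℝ ℂ j α).toContinuousLinearMap.hasFDerivAt.comp_hasDerivAt t hexp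

section LeftInvariantDerivatives

variable (Z p : Matrix (Fin n) (Fin n) ℂ) (j α : Fin n)

theorem lieD_entry : lieD Z (fun z => z j α) p = (p * Z) j α := by
  simpa [lieD] using (hasDerivAt_mul_exp_smul_mul_apply p Z 1 j α 0).deriv

theorem lieD2_entry : lieD2 Z (fun z => z j α) p = (p * (Z * Z)) j α := by
  have hderiv : deriv (fun s : ℝ => (p * NormedSpace.exp (s • Z)) j α)
      = fun t => (p * NormedSpace.exp (t • Z) * Z) j α := by
    funext t
    simpa using (hasDerivAt_mul_exp_smul_mul_apply p Z 1 j α t).deriv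
  rw [lieD2, iteratedDeriv_succ, iteratedDeriv_one, hderiv, ← mul_assoc]
  simpa using (hasDerivAt_mul_exp_smul_mul_apply p Z Z j α 0).deriv

theorem tensTerm_entry_of_commute (hZ : Commute Z Zᵀ) :
    tensTerm Z (fun z => z j α) p = (p * (Z * Z)) j α := by
  rw [tensTerm, lieD2_entry, lieD_entry, hZ.eq, sub_self, Matrix.mul_zero, Matrix.zero_apply,
    sub_zero]

end LeftInvariantDerivatives

section Basis

variable (r s t : Fin n)

theorem Ybas_transpose : (Ybas r s)ᵀ = -Ybas r s := by
  simp only [Ybas, transpose_smul, transpose_sub, transpose_single]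
  module

theorem iXbas_transpose : (iXbas r s)ᵀ = iXbas r s := by
  simp only [iXbas, transpose_smul, transpose_add, transpose_single]
  module

theorem iDbas_transpose : (iDbas t)ᵀ = iDbas t := by
  rw [iDbas, transpose_smul, transpose_single]

theorem Ybas_mul_self_add_iXbas_mul_self :
    Ybas r s * Ybas r s + iXbas r s * iXbas r s = -(single r r 1 + single s s 1) := by
  have hhalf : ((Real.sqrt 2)⁻¹ * (Real.sqrt 2)⁻¹ : ℝ) = 2⁻¹ := by
    rw [← mul_inv, Real.mul_self_sqrt zero_le_two]
  simp only [Ybas, iXbas, smul_mul_smul_comm, hhalf, Complex.I_mul_I, mul_sub, sub_mul, mul_add,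
    add_mul, single_mul_single_same, mul_one]
  module

theorem iDbas_mul_self : iDbas t * iDbas t = -single t t 1 := by
  rw [iDbas, smul_mul_smul_comm, Complex.I_mul_I, single_mul_single_same, mul_one, neg_one_smul]

end Basis

section Entries

variable (p : Matrix (Fin n) (Fin n) ℂ) (j α k β r s t : Fin n)

theorem tensTerm_Ybas_add_tensTerm_iXbas_entry :
    tensTerm (Ybas r s) (fun z => z j α) p + tensTerm (iXbas r s) (fun z => z j α) p
      = -((p * single r r (1 : ℂ)) j α + (p * single s s (1 : ℂ)) j α) := by
  have hY : Commute (Ybas r s) (Ybas r s)ᵀ := by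
    rw [Ybas_transpose]; exact (Commute.refl _).neg_right
  have hX : Commute (iXbas r s) (iXbas r s)ᵀ := by rw [iXbas_transpose]
  rw [tensTerm_entry_of_commute _ _ _ _ hY, tensTerm_entry_of_commute _ _ _ _ hX,
    ← Matrix.add_apply, ← Matrix.mul_add, Ybas_mul_self_add_iXbas_mul_self, Matrix.mul_neg,
    Matrix.neg_apply, Matrix.mul_add, Matrix.add_apply]

theorem tensTerm_iDbas_entry :
    tensTerm (iDbas t) (fun z => z j α) p = -(p * single t t (1 : ℂ)) j α := by
  have hD : Commute (iDbas t) (iDbas t)ᵀ := by rw [iDbas_transpose]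
  rw [tensTerm_entry_of_commute _ _ _ _ hD, iDbas_mul_self, Matrix.mul_neg, Matrix.neg_apply]

theorem lieD_Ybas_mul_add_lieD_iXbas_mul_entry :
    lieD (Ybas r s) (fun z => z j α) p * lieD (Ybas r s) (fun z => z k β) p
      + lieD (iXbas r s) (fun z => z j α) p * lieD (iXbas r s) (fun z => z k β) p
      = -((p * single r s (1 : ℂ)) j α * (p * single s r (1 : ℂ)) k β
          + (p * single s r (1 : ℂ)) j α * (p * single r s (1 : ℂ)) k β) := by
  simp only [lieD_entry, Ybas, iXbas, Matrix.mul_smul, Matrix.mul_sub, Matrix.mul_add,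
    Matrix.smul_apply, Matrix.sub_apply, Matrix.add_apply, Complex.real_smul, smul_eq_mul]
  generalize (p * single r s (1 : ℂ)) j α = a, (p * single s r (1 : ℂ)) j α = b,
    (p * single r s (1 : ℂ)) k β = c, (p * single s r (1 : ℂ)) k β = d
  set u : ℂ := (((Real.sqrt 2)⁻¹ : ℝ) : ℂ)
  have hu : u * u = 2⁻¹ := by
    rw [← Complex.ofReal_mul, ← mul_inv, Real.mul_self_sqrt zero_le_two]
    norm_num
  linear_combination ((a - b) * (c - d) - (a + b) * (c + d)) * hu
    + u ^ 2 * (a + b) * (c + d) * Complex.I_mul_I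

theorem lieD_iDbas_mul_entry :
    lieD (iDbas t) (fun z => z j α) p * lieD (iDbas t) (fun z => z k β) p
      = -((p * single t t (1 : ℂ)) j α * (p * single t t (1 : ℂ)) k β) := by
  simp only [lieD_entry, iDbas, Matrix.mul_smul, Matrix.smul_apply, smul_eq_mul]
  linear_combination
    (p * single t t (1 : ℂ)) j α * (p * single t t (1 : ℂ)) k β * Complex.I_mul_I

end Entries

theorem tension_entry (p : Matrix (Fin n) (Fin n) ℂ) (j α : Fin n) :
    tension (fun z => z j α) p = -(n : ℂ) * p j α := by
  have hsum := Finset.two_nsmul_sum_sum_ite_lt_add_sum_diag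
    (fun r s : Fin n => -((p * single r r (1 : ℂ)) j α + (p * single s s (1 : ℂ)) j α))
    (fun r s => by ring) (fun t : Fin n => -(p * single t t (1 : ℂ)) j α)
    (fun t => by rw [two_nsmul]; ring)
  have hpairs : ∑ r : Fin n, ∑ s : Fin n,
      -((p * single r r (1 : ℂ)) j α + (p * single s s (1 : ℂ)) j α)
      = 2 * (-(n : ℂ) * p j α) := by
    simp only [neg_add, Finset.sum_add_distrib, Finset.sum_neg_distrib, Finset.sum_const,
      Finset.card_univ, Fintype.card_fin, nsmul_eq_mul, ← Finset.mul_sum,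
      sum_mul_single_self_apply]
    ring
  rw [hpairs, two_nsmul, ← two_mul] at hsum
  rw [tension]
  simp only [tensTerm_Ybas_add_tensTerm_iXbas_entry, tensTerm_iDbas_entry]
  exact mul_left_cancel₀ two_ne_zero hsum

theorem conf_entry (p : Matrix (Fin n) (Fin n) ℂ) (j α k β : Fin n) :
    conf (fun z => z j α) (fun z => z k β) p = -(p k α * p j β) := by
  have hsum := Finset.two_nsmul_sum_sum_ite_lt_add_sum_diag
    (fun r s : Fin n => -((p * single r s (1 : ℂ)) j α * (p * single s r (1 : ℂ)) k β
      + (p * single s r (1 : ℂ)) j α * (p * single r s (1 : ℂ)) k β))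
    (fun r s => by ring)
    (fun t : Fin n => -((p * single t t (1 : ℂ)) j α * (p * single t t (1 : ℂ)) k β))
    (fun t => by rw [two_nsmul]; ring)
  have hpairs : ∑ r : Fin n, ∑ s : Fin n,
      -((p * single r s (1 : ℂ)) j α * (p * single s r (1 : ℂ)) k β
        + (p * single s r (1 : ℂ)) j α * (p * single r s (1 : ℂ)) k β)
      = 2 * -(p k α * p j β) := by
    simp only [mul_single_apply, mul_one, mul_ite, ite_mul, zero_mul, mul_zero, neg_add_rev,
      Finset.sum_add_distrib, Finset.sum_neg_distrib, Finset.sum_ite_eq', Finset.mem_univ,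
      ↓reduceIte, Finset.sum_ite_irrel, Finset.sum_const_zero, mul_neg]
    ring
  rw [hpairs, two_nsmul, ← two_mul] at hsum
  rw [conf]
  simp only [lieD_Ybas_mul_add_lieD_iXbas_mul_entry, lieD_iDbas_mul_entry]
  exact mul_left_cancel₀ two_ne_zero hsum

theorem stmt_13_general (j α k β : Fin n) (p : Matrix (Fin n) (Fin n) ℂ) :
    tension (fun z => z j α) p = -(n : ℂ) * p j α ∧
    conf (fun z => z j α) (fun z => z k β) p = -(p k α * p j β) :=
  ⟨tension_entry p j α, conf_entry p j α k β⟩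

/-- the matrix coefficients `z_{jα}` of the standard representation of
`U(n)` satisfy `τ(z_{jα}) = −n·z_{jα}` and `κ(z_{jα}, z_{kβ}) = −z_{kα}z_{jβ}`. -/
theorem stmt_13 (j α k β : Fin n) (p : Matrix (Fin n) (Fin n) ℂ)
    (hp : p ∈ Matrix.unitaryGroup (Fin n) ℂ) :
    tension (fun z => z j α) p = -(n : ℂ) * p j α ∧
    conf (fun z => z j α) (fun z => z k β) p = -(p k α * p j β) :=
  stmt_13_general j α k β p
end
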